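/- Let H ∈ 𝔪, let O be a Hermitian N×N matrix with iO ∈ 𝔪, and let ρ be a density matrix. Then for every g⁺, g⁻ ∈ G the number Tr(φ(g⁻) ρ φ(g⁻)⁻¹ · [H, φ(g⁺) O φ(g⁺)⁻¹]) is real, and ∫_G ∫_G ( Tr(φ(g⁻) ρ φ(g⁻)⁻¹ · [H, φ(g⁺) O φ(g⁺)⁻¹]) )² dμ(g⁺) dμ(g⁻) = ‖H‖_K² · Tr(O²) · ‖(iρ)_𝔪‖_F² / d². -/

import Mathlib

/-!
The gradient is `⟪[ρ', H], O'⟫` (Frobenius inner product) with `ρ' = φ(g⁻) ρ φ(g⁻)⁻¹` and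
`O' = φ(g⁺) O φ(g⁺)⁻¹`; it is real because `ρ'` and `[H, O']` are Hermitian. For the irreducible
unitary conjugation action on `𝔪_ℂ`, Schur's lemma gives the orthogonality relation
`∫ |⟪X, g • A⟫|² dg = ‖A_𝔪‖² ‖X_𝔪‖² / d` for `A ∈ 𝔪_ℂ`. With `A = O` it evaluates the
`g⁺`-integral as `‖O‖² ‖[ρ', H]_𝔪‖² / d`. The `𝔪`-coordinates of `[ρ', H]` are `⟪[H, F_j], ρ'⟫`,
and since `[H, F_j] ∈ 𝔪` only `ρ_𝔪` contributes, so a second application, with `A = ρ_𝔪` and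
`X = [H, F_j]`, evaluates the `g⁻`-integral.
-/

open MeasureTheory Matrix
open scoped ComplexOrder

theorem Module.End.exists_eq_smul_of_commute_of_irreducible {K M ι : Type*} [Field K]
    [IsAlgClosed K] [AddCommGroup M] [Module K M] {V : Submodule K M} [FiniteDimensional K V]
    (hV : V ≠ ⊥) (σ : ι → M →ₗ[K] M) (hσ : ∀ i, ∀ x ∈ V, σ i x ∈ V)
    (hirr : ∀ W ≤ V, (∀ i, ∀ x ∈ W, σ i x ∈ W) → W = ⊥ ∨ W = V)
    (T : M →ₗ[K] M) (hT : ∀ x ∈ V, T x ∈ V) (hcomm : ∀ i, ∀ x ∈ V, T (σ i x) = σ i (T x)) :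
    ∃ c : K, ∀ x ∈ V, T x = c • x := by
  have : Nontrivial V := Submodule.nontrivial_iff_ne_bot.mpr hV
  obtain ⟨c, hc⟩ := Module.End.exists_eigenvalue (T.restrict hT)
  obtain ⟨v, hv⟩ := hc.exists_hasEigenvector
  let W := V ⊓ LinearMap.ker (T - c • LinearMap.id)
  have hv_mem : (v : M) ∈ W := ⟨v.2, by
    simpa [sub_eq_zero, LinearMap.restrict_apply] using congrArg Subtype.val hv.apply_eq_smul⟩
  have hWV : W = V := by
    refine (hirr W inf_le_left fun i x hx => ⟨hσ i x hx.1, ?_⟩).resolve_left ?_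
    · have hx' : T x = c • x := sub_eq_zero.mp hx.2
      simp [hcomm i x hx.1, hx']
    · exact fun hW => hv.2 (Subtype.ext (by simpa [hW] using hv_mem))
  exact ⟨c, fun x hx => sub_eq_zero.mp (hWV.ge hx).2⟩

theorem LinearMap.mapsTo_span_of_mapsTo_span_restrictScalars {R S M : Type*} [CommSemiring R]
    [Semiring S] [Algebra R S] [AddCommMonoid M] [Module R M] [Module S M] [IsScalarTower R S M]
    {s : Set M} (f : M →ₗ[S] M)
    (hf : Set.MapsTo f (Submodule.span R s) (Submodule.span R s)) :
    Set.MapsTo f (Submodule.span S s) (Submodule.span S s) := fun _ hx =>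
  (Submodule.span_le (p := (Submodule.span S s).comap f)).mpr
    (fun _ hy => Submodule.span_le_restrictScalars R S s (hf (Submodule.subset_span hy))) hx

namespace FrobeniusTwirl

variable {n : Type*} [Fintype n]

def frobeniusInner : Matrix n n ℂ →ₗ⋆[ℂ] Matrix n n ℂ →ₗ[ℂ] ℂ :=
  LinearMap.mk₂'ₛₗ (starRingEnd ℂ) (RingHom.id ℂ) (fun A B => (Aᴴ * B).trace)
    (fun _ _ _ => by simp [add_mul]) (fun _ _ _ => by simp)
    (fun _ _ _ => by simp [mul_add]) (fun _ _ _ => by simp)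

lemma frobeniusInner_apply (A B : Matrix n n ℂ) : frobeniusInner A B = (Aᴴ * B).trace := rfl

lemma star_frobeniusInner (A B : Matrix n n ℂ) :
    star (frobeniusInner A B) = frobeniusInner B A := by
  rw [frobeniusInner_apply, ← trace_conjTranspose, conjTranspose_mul, conjTranspose_conjTranspose,
    frobeniusInner_apply]

lemma frobeniusInner_mul_frobeniusInner (A B : Matrix n n ℂ) :
    frobeniusInner A B * frobeniusInner B A = Complex.normSq (frobeniusInner A B) := by
  rw [← star_frobeniusInner A B, Complex.star_def, Complex.mul_conj]

lemma frobeniusInner_self_eq_zero {A : Matrix n n ℂ} : frobeniusInner A A = 0 ↔ A = 0 :=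
  trace_conjTranspose_mul_self_eq_zero_iff

lemma frobeniusInner_of_skew {A : Matrix n n ℂ} (hA : Aᴴ = -A) (B : Matrix n n ℂ) :
    frobeniusInner A B = -(A * B).trace := by
  rw [frobeniusInner_apply, hA, neg_mul, trace_neg]

lemma _root_.Continuous.frobeniusInner {X : Type*} [TopologicalSpace X] {f k : X → Matrix n n ℂ}
    (hf : Continuous f) (hk : Continuous k) : Continuous fun x => frobeniusInner (f x) (k x) :=
  (hf.matrix_conjTranspose.matrix_mul hk).matrix_trace

omit [Fintype n] in
lemma conjTranspose_eq_neg_of_mem_span {s : Set (Matrix n n ℂ)} (hs : ∀ A ∈ s, Aᴴ = -A)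
    {X : Matrix n n ℂ} (hX : X ∈ Submodule.span ℝ s) : Xᴴ = -X :=
  skewAdjoint.mem_iff.mp <| (Submodule.span_le (p := skewAdjoint.submodule ℝ _)).mpr
    (fun A hA => skewAdjoint.mem_iff.mpr (hs A hA)) hX

lemma conjTranspose_lie (A B : Matrix n n ℂ) : ⁅A, B⁆ᴴ = ⁅Bᴴ, Aᴴ⁆ := by
  simp only [Ring.lie_def, conjTranspose_sub, conjTranspose_mul]

lemma isHermitian_lie_of_skew {A B : Matrix n n ℂ} (hA : Aᴴ = -A) (hB : B.IsHermitian) :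
    ⁅A, B⁆.IsHermitian := by
  rw [IsHermitian, conjTranspose_lie, hA, hB.eq, Ring.lie_def, Ring.lie_def]
  noncomm_ring

lemma conjTranspose_lie_of_skew {A B : Matrix n n ℂ} (hA : Aᴴ = -A) (hB : Bᴴ = -B) :
    ⁅A, B⁆ᴴ = -⁅A, B⁆ := by
  rw [conjTranspose_lie, hA, hB, Ring.lie_def, Ring.lie_def]
  noncomm_ring

lemma trace_mul_lie (A B C : Matrix n n ℂ) : (A * ⁅B, C⁆).trace = (⁅A, B⁆ * C).trace := by
  simp only [Ring.lie_def, mul_sub, sub_mul, trace_sub, ← mul_assoc]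
  rw [trace_mul_cycle A C B]

lemma trace_mul_lie_eq_frobeniusInner {R H : Matrix n n ℂ} (hR : R.IsHermitian) (hH : Hᴴ = -H)
    (Q : Matrix n n ℂ) : (R * ⁅H, Q⁆).trace = frobeniusInner ⁅R, H⁆ Q := by
  rw [frobeniusInner_apply, conjTranspose_lie, hH, hR.eq, trace_mul_lie]
  congr 2
  simp only [Ring.lie_def]
  noncomm_ring

lemma frobeniusInner_lie_of_skew {A B R : Matrix n n ℂ} (hA : Aᴴ = -A) (hB : Bᴴ = -B) :
    frobeniusInner A ⁅R, B⁆ = frobeniusInner ⁅B, A⁆ R := by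
  rw [frobeniusInner_of_skew hA, frobeniusInner_of_skew (conjTranspose_lie_of_skew hB hA),
    trace_mul_lie, trace_mul_comm, trace_mul_lie]

lemma im_trace_mul_eq_zero_of_isHermitian {A B : Matrix n n ℂ} (hA : A.IsHermitian)
    (hB : B.IsHermitian) : (A * B).trace.im = 0 := by
  rw [← Complex.conj_eq_iff_im, ← Complex.star_def, ← trace_conjTranspose, conjTranspose_mul,
    hA.eq, hB.eq, trace_mul_comm]

lemma normSq_frobeniusInner_of_skew {A B : Matrix n n ℂ} (hA : Aᴴ = -A) (hB : Bᴴ = -B) :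
    Complex.normSq (frobeniusInner A B) = (B * A).trace.re ^ 2 := by
  have him : (B * A).trace.im = 0 := by
    rw [← Complex.conj_eq_iff_im, ← Complex.star_def, ← trace_conjTranspose, conjTranspose_mul,
      hA, hB, neg_mul_neg, trace_mul_comm]
  rw [frobeniusInner_of_skew hA, trace_mul_comm, Complex.normSq_neg, Complex.normSq_apply, him]
  ring

section Projection

variable {d : ℕ} (F : Fin d → Matrix n n ℂ)

def orthogonalProj : Matrix n n ℂ →ₗ[ℂ] Matrix n n ℂ :=
  ∑ j, (frobeniusInner (F j)).smulRight (F j)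

lemma orthogonalProj_apply (X : Matrix n n ℂ) :
    orthogonalProj F X = ∑ j, frobeniusInner (F j) X • F j := by
  simp [orthogonalProj]

lemma orthogonalProj_mem (X : Matrix n n ℂ) :
    orthogonalProj F X ∈ Submodule.span ℂ (Set.range F) := by
  rw [orthogonalProj_apply]
  exact Submodule.sum_mem _ fun j _ => Submodule.smul_mem _ _ (Submodule.subset_span ⟨j, rfl⟩)

lemma frobeniusInner_orthogonalProj_eq_sum (Y X : Matrix n n ℂ) :
    frobeniusInner Y (orthogonalProj F X)
      = ∑ j, frobeniusInner (F j) X * frobeniusInner Y (F j) := by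
  simp [orthogonalProj_apply]

lemma frobeniusInner_orthogonalProj (Y X : Matrix n n ℂ) :
    frobeniusInner Y (orthogonalProj F X) = frobeniusInner (orthogonalProj F Y) X := by
  simp [orthogonalProj_apply, map_sum, ← star_frobeniusInner (F _) Y, mul_comm]

/-- `‖X_𝔪‖_F²`, for orthonormal `F`. -/
def normSqProj (X : Matrix n n ℂ) : ℝ := ∑ j, Complex.normSq (frobeniusInner (F j) X)

lemma frobeniusInner_orthogonalProj_self (X : Matrix n n ℂ) :
    frobeniusInner X (orthogonalProj F X) = normSqProj F X := by
  simp [orthogonalProj_apply, normSqProj, map_sum, ← frobeniusInner_mul_frobeniusInner]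

variable {F}

lemma normSqProj_of_skew (hF : ∀ j, (F j)ᴴ = -F j) {X : Matrix n n ℂ} (hX : Xᴴ = -X) :
    normSqProj F X = ∑ j, ((X * F j).trace.re) ^ 2 := by
  simp only [normSqProj, normSq_frobeniusInner_of_skew (hF _) hX]

lemma normSqProj_of_isHermitian (hF : ∀ j, (F j)ᴴ = -F j) {ρ : Matrix n n ℂ}
    (hρ : ρ.IsHermitian) : normSqProj F ρ = ∑ j, (((Complex.I • ρ) * F j).trace.re) ^ 2 := by
  have hIρ : (Complex.I • ρ)ᴴ = -(Complex.I • ρ) := by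
    rw [conjTranspose_smul, hρ.eq, Complex.star_def, Complex.conj_I, neg_smul]
  rw [← normSqProj_of_skew hF hIρ]
  simp [normSqProj]

variable (hF : ∀ j k, frobeniusInner (F j) (F k) = if j = k then 1 else 0)
include hF

lemma orthogonalProj_eq_self {Z : Matrix n n ℂ} (hZ : Z ∈ Submodule.span ℂ (Set.range F)) :
    orthogonalProj F Z = Z := by
  refine LinearMap.eqOn_span (g := LinearMap.id) ?_ hZ
  rintro _ ⟨k, rfl⟩
  simp [orthogonalProj_apply, hF]

lemma frobeniusInner_orthogonalProj_of_mem {Z : Matrix n n ℂ}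
    (hZ : Z ∈ Submodule.span ℂ (Set.range F)) (X : Matrix n n ℂ) :
    frobeniusInner Z (orthogonalProj F X) = frobeniusInner Z X := by
  rw [frobeniusInner_orthogonalProj, orthogonalProj_eq_self hF hZ]

lemma normSqProj_orthogonalProj (X : Matrix n n ℂ) :
    normSqProj F (orthogonalProj F X) = normSqProj F X := by
  simp only [normSqProj,
    frobeniusInner_orthogonalProj_of_mem hF (Submodule.subset_span (Set.mem_range_self _))]

lemma frobeniusInner_self_eq_normSqProj {Z : Matrix n n ℂ}
    (hZ : Z ∈ Submodule.span ℂ (Set.range F)) : frobeniusInner Z Z = normSqProj F Z := by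
  rw [← frobeniusInner_orthogonalProj_of_mem hF hZ, frobeniusInner_orthogonalProj_self]

lemma normSqProj_eq_re_trace_mul_self {O : Matrix n n ℂ} (hO : O.IsHermitian)
    (hOV : O ∈ Submodule.span ℂ (Set.range F)) : normSqProj F O = (O * O).trace.re := by
  rw [← Complex.ofReal_re (normSqProj F O), ← frobeniusInner_self_eq_normSqProj hF hOV,
    frobeniusInner_apply, hO.eq]

end Projection

section ConjAction

variable [DecidableEq n] {G : Type*} [Group G] (φ : G →* unitary (Matrix n n ℂ))

def conjAction : G →* (Matrix n n ℂ ≃⋆ₐ[ℂ] Matrix n n ℂ) :=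
  (Unitary.conjStarAlgAut ℂ _).comp φ

lemma conjAction_apply (g : G) (X : Matrix n n ℂ) :
    conjAction φ g X = (φ g : Matrix n n ℂ) * X * (φ g⁻¹ : Matrix n n ℂ) := by
  rw [map_inv]
  rfl

lemma frobeniusInner_conjAction (g : G) (A B : Matrix n n ℂ) :
    frobeniusInner (conjAction φ g A) (conjAction φ g B) = frobeniusInner A B := by
  rw [frobeniusInner_apply, ← star_eq_conjTranspose, ← map_star, ← map_mul, conjAction,
    MonoidHom.comp_apply, Unitary.conjStarAlgAut_apply, trace_mul_cycle,
    Unitary.coe_star_mul_self, one_mul, frobeniusInner_apply, star_eq_conjTranspose]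

lemma isHermitian_conjAction {A : Matrix n n ℂ} (hA : A.IsHermitian) (g : G) :
    (conjAction φ g A).IsHermitian := by
  rw [IsHermitian, ← star_eq_conjTranspose, ← map_star, star_eq_conjTranspose, hA.eq]

lemma continuous_conjAction_apply [TopologicalSpace G]
    (hφ : Continuous fun g => (φ g : Matrix n n ℂ)) (A : Matrix n n ℂ) :
    Continuous fun g => conjAction φ g A :=
  (hφ.matrix_mul continuous_const).matrix_mul hφ.star

variable {φ} {d : ℕ} {F : Fin d → Matrix n n ℂ}

lemma frobeniusInner_conjAction_orthogonalProj
    (hF : ∀ j k, frobeniusInner (F j) (F k) = if j = k then 1 else 0)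
    (hV : ∀ g, ∀ X ∈ Submodule.span ℂ (Set.range F),
      conjAction φ g X ∈ Submodule.span ℂ (Set.range F))
    {K : Matrix n n ℂ} (hK : K ∈ Submodule.span ℂ (Set.range F)) (g : G) (X : Matrix n n ℂ) :
    frobeniusInner K (conjAction φ g (orthogonalProj F X))
      = frobeniusInner K (conjAction φ g X) := by
  have hK' : K = conjAction φ g (conjAction φ g⁻¹ K) := by simp [← StarAlgEquiv.mul_apply]
  rw [hK', frobeniusInner_conjAction, frobeniusInner_conjAction,
    frobeniusInner_orthogonalProj_of_mem hF (hV _ K hK)]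

end ConjAction

section Twirl

attribute [local instance] Matrix.frobeniusNormedAddCommGroup Matrix.frobeniusNormedSpace

/- Instance search does not see that the norm topology of `frobeniusNormedAddCommGroup` is the
product topology of `Matrix`, so the `ContinuousENorm` behind `Integrable` is supplied by hand. -/
noncomputable local instance : ContinuousENorm (Matrix n n ℂ) :=
  SeminormedAddGroup.toContinuousENorm

variable {G : Type*} [MeasurableSpace G] (μ : Measure G)

lemma integral_comp_linearMap {E : Type*} [NormedAddCommGroup E] [NormedSpace ℂ E]
    [CompleteSpace E] (L : Matrix n n ℂ →ₗ[ℂ] E) {f : G → Matrix n n ℂ} (hf : Integrable f μ) :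
    ∫ g, L (f g) ∂μ = L (∫ g, f g ∂μ) :=
  L.toContinuousLinearMap.integral_comp_comm hf

variable [DecidableEq n] [Group G] (φ : G →* unitary (Matrix n n ℂ))

noncomputable def twirl (A X : Matrix n n ℂ) : Matrix n n ℂ :=
  ∫ g, frobeniusInner (conjAction φ g A) X • conjAction φ g A ∂μ

variable {μ φ}

lemma twirl_smul (A X : Matrix n n ℂ) (c : ℂ) : twirl μ φ A (c • X) = c • twirl μ φ A X := by
  rw [twirl, twirl, ← integral_smul]
  simp only [map_smul, smul_eq_mul, mul_smul]

lemma conjAction_twirl [MeasurableMul G] [μ.IsMulLeftInvariant] (h : G) (A X : Matrix n n ℂ) :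
    conjAction φ h (twirl μ φ A X) = twirl μ φ A (conjAction φ h X) := by
  let L := (conjAction φ h).toAlgEquiv.toLinearEquiv.toContinuousLinearEquiv
  calc conjAction φ h (twirl μ φ A X)
      = ∫ g, L (frobeniusInner (conjAction φ g A) X • conjAction φ g A) ∂μ :=
        (L.integral_comp_comm _).symm
    _ = ∫ g, frobeniusInner (conjAction φ (h * g) A) (conjAction φ h X) •
          conjAction φ (h * g) A ∂μ := by
        simp [L, frobeniusInner_conjAction]
    _ = twirl μ φ A (conjAction φ h X) :=
        integral_mul_left_eq_self (fun g =>
          frobeniusInner (conjAction φ g A) (conjAction φ h X) • conjAction φ g A) h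

variable [TopologicalSpace G] [CompactSpace G] [BorelSpace G]
  (hφ : Continuous fun g => (φ g : Matrix n n ℂ))
include hφ

lemma integrable_twirl_integrand [IsFiniteMeasure μ] (A X : Matrix n n ℂ) :
    Integrable (fun g => frobeniusInner (conjAction φ g A) X • conjAction φ g A) μ := by
  have hA := continuous_conjAction_apply φ hφ A
  exact ((hA.frobeniusInner continuous_const).smul hA).integrable_of_hasCompactSupport
    (HasCompactSupport.of_compactSpace _)

lemma twirl_add [IsFiniteMeasure μ] (A X Y : Matrix n n ℂ) :
    twirl μ φ A (X + Y) = twirl μ φ A X + twirl μ φ A Y := by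
  rw [twirl, twirl, twirl, ← integral_add (integrable_twirl_integrand hφ A X)
    (integrable_twirl_integrand hφ A Y)]
  simp only [map_add, add_smul]

lemma frobeniusInner_twirl [IsFiniteMeasure μ] (A X Y : Matrix n n ℂ) :
    frobeniusInner Y (twirl μ φ A X)
      = ∫ g, frobeniusInner (conjAction φ g A) X * frobeniusInner Y (conjAction φ g A) ∂μ := by
  rw [twirl, ← integral_comp_linearMap μ _ (integrable_twirl_integrand hφ A X)]
  simp

variable {d : ℕ} {F : Fin d → Matrix n n ℂ}
  (hF : ∀ j k, frobeniusInner (F j) (F k) = if j = k then 1 else 0)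
  (hV : ∀ g, ∀ X ∈ Submodule.span ℂ (Set.range F),
    conjAction φ g X ∈ Submodule.span ℂ (Set.range F))
  {A : Matrix n n ℂ} (hA : A ∈ Submodule.span ℂ (Set.range F))
include hF hV hA

omit [TopologicalSpace G] [CompactSpace G] [BorelSpace G] hφ in
lemma twirl_orthogonalProj (X : Matrix n n ℂ) :
    twirl μ φ A (orthogonalProj F X) = twirl μ φ A X := by
  simp only [twirl, frobeniusInner_orthogonalProj_of_mem hF (hV _ A hA)]

lemma twirl_mem [IsFiniteMeasure μ] (X : Matrix n n ℂ) :
    twirl μ φ A X ∈ Submodule.span ℂ (Set.range F) := by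
  have : orthogonalProj F (twirl μ φ A X) = twirl μ φ A X := by
    rw [twirl, ← integral_comp_linearMap μ _ (integrable_twirl_integrand hφ A X)]
    simp only [map_smul, orthogonalProj_eq_self hF (hV _ A hA)]
  exact this ▸ orthogonalProj_mem F _

lemma sum_frobeniusInner_twirl [IsProbabilityMeasure μ] :
    ∑ j, frobeniusInner (F j) (twirl μ φ A (F j)) = frobeniusInner A A := by
  have hA' := continuous_conjAction_apply φ hφ A
  have hint (j : Fin d) : Integrable (fun g => frobeniusInner (conjAction φ g A) (F j) *
      frobeniusInner (F j) (conjAction φ g A)) μ :=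
    ((hA'.frobeniusInner continuous_const).mul (continuous_const.frobeniusInner hA')
      ).integrable_of_hasCompactSupport (HasCompactSupport.of_compactSpace _)
  have hsum (g : G) : ∑ j, frobeniusInner (conjAction φ g A) (F j) *
      frobeniusInner (F j) (conjAction φ g A) = frobeniusInner A A := by
    simp_rw [mul_comm (frobeniusInner (conjAction φ g A) _),
      ← frobeniusInner_orthogonalProj_eq_sum, orthogonalProj_eq_self hF (hV g A hA),
      frobeniusInner_conjAction]
  simp_rw [frobeniusInner_twirl hφ, ← integral_finsetSum _ fun j _ => hint j, hsum]
  simp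

variable [MeasurableMul G] [μ.IsMulLeftInvariant] [IsProbabilityMeasure μ]
  (hirr : ∀ W ≤ Submodule.span ℂ (Set.range F),
    (∀ g, ∀ X ∈ W, conjAction φ g X ∈ W) → W = ⊥ ∨ W = Submodule.span ℂ (Set.range F))
include hirr

/- Schur's lemma applied to the intertwiner `X ↦ ∫ ⟪gA, X⟫ • gA`: it is scalar on the span, and
its trace over the orthonormal family `F` pins the scalar down to `⟪A, A⟫ / d`. -/
theorem integral_frobeniusInner_mul_frobeniusInner (X Y : Matrix n n ℂ) :
    ∫ g, frobeniusInner (conjAction φ g A) X * frobeniusInner Y (conjAction φ g A) ∂μ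
      = frobeniusInner A A / d * frobeniusInner Y (orthogonalProj F X) := by
  rcases eq_or_ne A 0 with rfl | hA0
  · simp
  let T : Matrix n n ℂ →ₗ[ℂ] Matrix n n ℂ :=
    IsLinearMap.mk' (twirl μ φ A) ⟨twirl_add hφ A, fun c X => twirl_smul A X c⟩
  obtain ⟨c, hc⟩ := Module.End.exists_eq_smul_of_commute_of_irreducible
    ((Submodule.ne_bot_iff _).mpr ⟨A, hA, hA0⟩)
    (fun g => (conjAction φ g).toAlgEquiv.toLinearMap) hV hirr T
    (fun X _ => twirl_mem hφ hF hV hA X) (fun g X _ => (conjAction_twirl g A X).symm)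
  have hdc : (d : ℂ) * c = frobeniusInner A A := by
    have hTF (j : Fin d) : twirl μ φ A (F j) = c • F j :=
      hc _ (Submodule.subset_span (Set.mem_range_self j))
    rw [← sum_frobeniusInner_twirl (μ := μ) hφ hF hV hA]
    simp [hTF, hF, mul_comm]
  have hd : (d : ℂ) ≠ 0 := by
    rintro h
    rw [h, zero_mul, eq_comm, frobeniusInner_self_eq_zero] at hdc
    exact hA0 hdc
  rw [← frobeniusInner_twirl hφ, ← twirl_orthogonalProj hF hV hA,
    show twirl μ φ A _ = T _ from rfl, hc _ (orthogonalProj_mem F X), map_smul, ← hdc,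
    mul_div_cancel_left₀ _ hd, smul_eq_mul]

theorem integral_normSq_frobeniusInner_conjAction (X : Matrix n n ℂ) :
    ∫ g, Complex.normSq (frobeniusInner X (conjAction φ g A)) ∂μ
      = normSqProj F A * normSqProj F X / d := by
  apply Complex.ofReal_injective
  rw [← integral_complex_ofReal]
  push_cast
  rw [← frobeniusInner_self_eq_normSqProj hF hA, ← frobeniusInner_orthogonalProj_self,
    mul_div_right_comm,
    ← integral_frobeniusInner_mul_frobeniusInner (μ := μ) hφ hF hV hA hirr X X]
  simp_rw [mul_comm (frobeniusInner (conjAction φ _ A) X), frobeniusInner_mul_frobeniusInner]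

end Twirl

section Variance

variable [DecidableEq n] {G : Type*} [Group G] [TopologicalSpace G] [CompactSpace G]
  [MeasurableSpace G] [BorelSpace G] [MeasurableMul G] {μ : Measure G} [μ.IsMulLeftInvariant]
  [IsProbabilityMeasure μ] {φ : G →* unitary (Matrix n n ℂ)}
  (hφ : Continuous fun g => (φ g : Matrix n n ℂ)) {d : ℕ} {F : Fin d → Matrix n n ℂ}
  (hF : ∀ j k, frobeniusInner (F j) (F k) = if j = k then 1 else 0)
  (hV : ∀ g, ∀ X ∈ Submodule.span ℂ (Set.range F),
    conjAction φ g X ∈ Submodule.span ℂ (Set.range F))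
  (hirr : ∀ W ≤ Submodule.span ℂ (Set.range F),
    (∀ g, ∀ X ∈ W, conjAction φ g X ∈ W) → W = ⊥ ∨ W = Submodule.span ℂ (Set.range F))
include hφ hF hV hirr

lemma integral_re_trace_mul_lie_sq {R H O : Matrix n n ℂ} (hR : R.IsHermitian) (hH : Hᴴ = -H)
    (hO : O.IsHermitian) (hOV : O ∈ Submodule.span ℂ (Set.range F)) :
    ∫ g, ((R * ⁅H, conjAction φ g O⁆).trace.re) ^ 2 ∂μ
      = normSqProj F O * normSqProj F ⁅R, H⁆ / d := by
  have hz (g : G) : ((R * ⁅H, conjAction φ g O⁆).trace.re) ^ 2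
      = Complex.normSq (frobeniusInner ⁅R, H⁆ (conjAction φ g O)) := by
    have him := im_trace_mul_eq_zero_of_isHermitian hR
      (isHermitian_lie_of_skew hH (isHermitian_conjAction φ hO g))
    rw [← trace_mul_lie_eq_frobeniusInner hR hH, Complex.normSq_apply, him]
    ring
  simp_rw [hz]
  exact integral_normSq_frobeniusInner_conjAction hφ hF hV hOV hirr _

lemma integral_normSqProj_lie (hFskew : ∀ j, (F j)ᴴ = -F j) {H : Matrix n n ℂ} (hH : Hᴴ = -H)
    (hK : ∀ j, ⁅H, F j⁆ ∈ Submodule.span ℂ (Set.range F)) (ρ : Matrix n n ℂ) :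
    ∫ g, normSqProj F ⁅conjAction φ g ρ, H⁆ ∂μ
      = normSqProj F ρ * (∑ j, normSqProj F ⁅H, F j⁆) / d := by
  have hcont := continuous_conjAction_apply φ hφ (orthogonalProj F ρ)
  have hcoord (g : G) : normSqProj F ⁅conjAction φ g ρ, H⁆
      = ∑ j, Complex.normSq (frobeniusInner ⁅H, F j⁆ (conjAction φ g (orthogonalProj F ρ))) := by
    simp only [normSqProj, frobeniusInner_lie_of_skew (hFskew _) hH,
      frobeniusInner_conjAction_orthogonalProj hF hV (hK _)]
  have hint (j : Fin d) : Integrable (fun g => Complex.normSq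
      (frobeniusInner ⁅H, F j⁆ (conjAction φ g (orthogonalProj F ρ)))) μ :=
    (Complex.continuous_normSq.comp (continuous_const.frobeniusInner hcont)
      ).integrable_of_hasCompactSupport (HasCompactSupport.of_compactSpace _)
  simp_rw [hcoord, integral_finsetSum _ fun j _ => hint j, integral_normSq_frobeniusInner_conjAction hφ hF hV (orthogonalProj_mem F ρ) hirr,
    normSqProj_orthogonalProj hF, Finset.mul_sum, Finset.sum_div]

end Variance

end FrobeniusTwirl

open FrobeniusTwirl

theorem stmt_1_general
    {G : Type} [Group G] [TopologicalSpace G] [IsTopologicalGroup G] [CompactSpace G]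
    [MeasurableSpace G] [BorelSpace G]
    (μ : Measure G) [μ.IsHaarMeasure] [IsProbabilityMeasure μ]
    {N d : ℕ}
    (φ : G →* Matrix.unitaryGroup (Fin N) ℂ)
    (hcont : Continuous fun g => (φ g : Matrix (Fin N) (Fin N) ℂ))
    (F : Fin d → Matrix (Fin N) (Fin N) ℂ)
    (hskew : ∀ j, (F j)ᴴ = -(F j))
    (horth : ∀ j k, Matrix.trace (F j * F k) = if j = k then (-1 : ℂ) else 0)
    (hLie : ∀ X ∈ Submodule.span ℝ (Set.range F), ∀ Y ∈ Submodule.span ℝ (Set.range F),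
      ⁅X, Y⁆ ∈ Submodule.span ℝ (Set.range F))
    (hconj : ∀ g : G, ∀ X ∈ Submodule.span ℝ (Set.range F),
      (φ g : Matrix (Fin N) (Fin N) ℂ) * X * (φ g⁻¹ : Matrix (Fin N) (Fin N) ℂ) ∈
        Submodule.span ℝ (Set.range F))
    (hirr : ∀ W : Submodule ℂ (Matrix (Fin N) (Fin N) ℂ),
      W ≤ Submodule.span ℂ (Set.range F) →
      (∀ g : G, ∀ X ∈ W,
        (φ g : Matrix (Fin N) (Fin N) ℂ) * X * (φ g⁻¹ : Matrix (Fin N) (Fin N) ℂ) ∈ W) →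
      W = ⊥ ∨ W = Submodule.span ℂ (Set.range F))
    (H : Matrix (Fin N) (Fin N) ℂ) (hH : H ∈ Submodule.span ℝ (Set.range F))
    (O : Matrix (Fin N) (Fin N) ℂ) (hO : Oᴴ = O)
    (hiO : Complex.I • O ∈ Submodule.span ℝ (Set.range F))
    (ρ : Matrix (Fin N) (Fin N) ℂ) (hρ : ρ.PosSemidef) :
    (∀ gp gm : G,
      (Matrix.trace ((φ gm : Matrix (Fin N) (Fin N) ℂ) * ρ * (φ gm⁻¹ : Matrix (Fin N) (Fin N) ℂ) *
        ⁅H, (φ gp : Matrix (Fin N) (Fin N) ℂ) * O * (φ gp⁻¹ : Matrix (Fin N) (Fin N) ℂ)⁆)).im = 0)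
    ∧
    (∫ gm, ∫ gp,
        ((Matrix.trace ((φ gm : Matrix (Fin N) (Fin N) ℂ) * ρ *
            (φ gm⁻¹ : Matrix (Fin N) (Fin N) ℂ) *
          ⁅H, (φ gp : Matrix (Fin N) (Fin N) ℂ) * O *
            (φ gp⁻¹ : Matrix (Fin N) (Fin N) ℂ)⁆)).re) ^ 2 ∂μ ∂μ)
      = (∑ j, ∑ k, ((Matrix.trace (⁅H, F k⁆ * F j)).re) ^ 2) *
          (Matrix.trace (O * O)).re *
          (∑ j, ((Matrix.trace ((Complex.I • ρ) * F j)).re) ^ 2) / (d : ℝ) ^ 2 := by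
  have hℝℂ := Submodule.span_le_restrictScalars ℝ ℂ (Set.range F)
  have hskew_span : ∀ X ∈ Submodule.span ℝ (Set.range F), Xᴴ = -X := fun _ =>
    conjTranspose_eq_neg_of_mem_span (by rintro _ ⟨j, rfl⟩; exact hskew j)
  have hF : ∀ j k, frobeniusInner (F j) (F k) = if j = k then 1 else 0 := fun j k => by
    rw [frobeniusInner_of_skew (hskew j), horth]
    split_ifs <;> simp
  have hV : ∀ g, ∀ X ∈ Submodule.span ℂ (Set.range F),
      conjAction φ g X ∈ Submodule.span ℂ (Set.range F) := fun g =>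
    LinearMap.mapsTo_span_of_mapsTo_span_restrictScalars (conjAction φ g).toAlgEquiv.toLinearMap
      (by simpa [Set.MapsTo, conjAction_apply] using hconj g)
  have hirr' : ∀ W ≤ Submodule.span ℂ (Set.range F), (∀ g, ∀ X ∈ W, conjAction φ g X ∈ W) →
      W = ⊥ ∨ W = Submodule.span ℂ (Set.range F) := fun W hW hinv =>
    hirr W hW (by simpa [conjAction_apply] using hinv)
  have hHskew : Hᴴ = -H := hskew_span H hH
  have hK (j : Fin d) : ⁅H, F j⁆ ∈ Submodule.span ℝ (Set.range F) :=
    hLie H hH (F j) (Submodule.subset_span ⟨j, rfl⟩)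
  have hOV : O ∈ Submodule.span ℂ (Set.range F) := by
    simpa [smul_smul] using Submodule.smul_mem _ (-Complex.I) (hℝℂ hiO)
  simp only [← conjAction_apply]
  refine ⟨fun gp gm => im_trace_mul_eq_zero_of_isHermitian
    (isHermitian_conjAction φ hρ.isHermitian gm)
    (isHermitian_lie_of_skew hHskew (isHermitian_conjAction φ hO gp)), ?_⟩
  rw [integral_congr_ae (ae_of_all _ fun gm => integral_re_trace_mul_lie_sq hcont hF hV hirr'
      (isHermitian_conjAction φ hρ.isHermitian gm) hHskew hO hOV), integral_div,
    integral_const_mul,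
    integral_normSqProj_lie hcont hF hV hirr' hskew hHskew (fun j => hℝℂ (hK j)),
    normSqProj_of_isHermitian hskew hρ.isHermitian, normSqProj_eq_re_trace_mul_self hF hO hOV]
  simp_rw [normSqProj_of_skew hskew (hskew_span _ (hK _))]
  rw [Finset.sum_comm]
  ring

/-- simple-group variance. Under the LASA hypotheses (Frobenius-orthonormal
skew-Hermitian family `F` spanning a conjugation-invariant Lie algebra `𝔪` with irreducible
complexified adjoint action), for `H ∈ 𝔪`, Hermitian `O` with `iO ∈ 𝔪`, and a density matrix
`ρ`, the abstracted gradient `Tr(φ(g⁻) ρ φ(g⁻)⁻¹ [H, φ(g⁺) O φ(g⁺)⁻¹])` is real for all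
`g⁺, g⁻`, and its second Haar moment equals `‖H‖_K² · Tr(O²) · ‖(iρ)_𝔪‖_F² / d²`. -/
theorem stmt_1
    {G : Type} [Group G] [TopologicalSpace G] [IsTopologicalGroup G] [CompactSpace G]
    [MeasurableSpace G] [BorelSpace G]
    (μ : Measure G) [μ.IsHaarMeasure] [IsProbabilityMeasure μ]
    {N d : ℕ} (hN : 1 ≤ N) (hd : 1 ≤ d)
    (φ : G →* Matrix.unitaryGroup (Fin N) ℂ)
    (hcont : Continuous fun g => (φ g : Matrix (Fin N) (Fin N) ℂ))
    (F : Fin d → Matrix (Fin N) (Fin N) ℂ)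
    (hskew : ∀ j, (F j)ᴴ = -(F j))
    (horth : ∀ j k, Matrix.trace (F j * F k) = if j = k then (-1 : ℂ) else 0)
    (hLie : ∀ X ∈ Submodule.span ℝ (Set.range F), ∀ Y ∈ Submodule.span ℝ (Set.range F),
      ⁅X, Y⁆ ∈ Submodule.span ℝ (Set.range F))
    (hconj : ∀ g : G, ∀ X ∈ Submodule.span ℝ (Set.range F),
      (φ g : Matrix (Fin N) (Fin N) ℂ) * X * (φ g⁻¹ : Matrix (Fin N) (Fin N) ℂ) ∈
        Submodule.span ℝ (Set.range F))
    (hirr : ∀ W : Submodule ℂ (Matrix (Fin N) (Fin N) ℂ),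
      W ≤ Submodule.span ℂ (Set.range F) →
      (∀ g : G, ∀ X ∈ W,
        (φ g : Matrix (Fin N) (Fin N) ℂ) * X * (φ g⁻¹ : Matrix (Fin N) (Fin N) ℂ) ∈ W) →
      W = ⊥ ∨ W = Submodule.span ℂ (Set.range F))
    (H : Matrix (Fin N) (Fin N) ℂ) (hH : H ∈ Submodule.span ℝ (Set.range F))
    (O : Matrix (Fin N) (Fin N) ℂ) (hO : Oᴴ = O)
    (hiO : Complex.I • O ∈ Submodule.span ℝ (Set.range F))
    (ρ : Matrix (Fin N) (Fin N) ℂ) (hρ : ρ.PosSemidef) (hρtr : ρ.trace = 1) :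
    (∀ gp gm : G,
      (Matrix.trace ((φ gm : Matrix (Fin N) (Fin N) ℂ) * ρ * (φ gm⁻¹ : Matrix (Fin N) (Fin N) ℂ) *
        ⁅H, (φ gp : Matrix (Fin N) (Fin N) ℂ) * O * (φ gp⁻¹ : Matrix (Fin N) (Fin N) ℂ)⁆)).im = 0)
    ∧
    (∫ gm, ∫ gp,
        ((Matrix.trace ((φ gm : Matrix (Fin N) (Fin N) ℂ) * ρ *
            (φ gm⁻¹ : Matrix (Fin N) (Fin N) ℂ) *
          ⁅H, (φ gp : Matrix (Fin N) (Fin N) ℂ) * O *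
            (φ gp⁻¹ : Matrix (Fin N) (Fin N) ℂ)⁆)).re) ^ 2 ∂μ ∂μ)
      = (∑ j, ∑ k, ((Matrix.trace (⁅H, F k⁆ * F j)).re) ^ 2) *
          (Matrix.trace (O * O)).re *
          (∑ j, ((Matrix.trace ((Complex.I • ρ) * F j)).re) ^ 2) / (d : ℝ) ^ 2 :=
  stmt_1_general μ φ hcont F hskew horth hLie hconj hirr H hH O hO hiO ρ hρ
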